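/- Let D ⊆ ℂ be open and D₀ ⊆ D closed and discrete. If f is a complex Nash function on D \ D₀ (holomorphic and, on each connected component, satisfying a nonzero polynomial identity P(z, f(z)) = 0), then f extends to a meromorphic function on D having only finitely many poles in each connected component of D. -/

import Mathlib

/-!
Write a polynomial relation as `Q(z, w) = a(z) w^d + ⋯ + a₀(z)` in `ℂ[X][Y]`. Cauchy's bound on
the roots of `Q(z, ·)` makes `a · f` locally bounded, so by Riemann's removable singularity
theorem `f = (a f) / a` is meromorphic, and `f` stays bounded near every point where `a` does not
vanish. Removing a discrete set from a connected open subset of the plane leaves it connected, so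
a single relation holds on all of a component of `D`, and the poles of `f` in that component lie
among the finitely many roots of `a`.
-/

open Filter Topology

open Metric Set Polynomial Asymptotics
open scoped Polynomial.Bivariate

theorem isOpen_setOf_mem_nhdsNE {X : Type*} [TopologicalSpace X] [T1Space X] (u : Set X) :
    IsOpen {z | u ∈ 𝓝[≠] z} := by
  refine isOpen_iff_mem_nhds.2 fun z hz => ?_
  have : ∀ᶠ y in 𝓝[≠] z, u ∈ 𝓝[≠] y :=
    (eventually_nhdsNE_eventually_nhds_iff.2 hz).mono fun y hy => mem_nhdsWithin_of_mem_nhds hy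
  rw [← nhdsNE_sup_pure z]
  exact ⟨this, hz⟩

theorem isOpen_of_forall_mem_nhdsNE {X : Type*} [TopologicalSpace X] {s : Set X}
    (hs : ∀ z ∈ s, s ∈ 𝓝[≠] z) : IsOpen s :=
  isOpen_iff_mem_nhds.2 fun z hz => by
    rw [← nhdsNE_sup_pure z]
    exact ⟨hs z hz, hz⟩

theorem sdiff_mem_nhdsNE_of_isolated {X : Type*} [TopologicalSpace X] {D D₀ : Set X}
    (hD : IsOpen D) (hclosed : ∀ z ∈ D, z ∈ closure D₀ → z ∈ D₀)
    (hdisc : ∀ z ∈ D₀, ∃ U : Set X, IsOpen U ∧ z ∈ U ∧ U ∩ D₀ = {z}) {z : X} (hz : z ∈ D) :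
    D \ D₀ ∈ 𝓝[≠] z := by
  refine inter_mem (mem_nhdsWithin_of_mem_nhds (hD.mem_nhds hz)) ?_
  by_cases hz₀ : z ∈ D₀
  · obtain ⟨U, hU, hzU, hUD₀⟩ := hdisc z hz₀
    refine mem_nhdsWithin.2 ⟨U, hU, hzU, fun w ⟨hwU, hwz⟩ hwD₀ => hwz ?_⟩
    exact hUD₀.subset ⟨hwU, hwD₀⟩
  · exact mem_nhdsWithin_of_mem_nhds <| mem_of_superset
      (isClosed_closure.isOpen_compl.mem_nhds (mt (hclosed z hz) hz₀))
      (compl_subset_compl.2 subset_closure)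

section Connectedness

variable {E : Type*} [NormedAddCommGroup E] [NormedSpace ℝ E]

theorem isPreconnected_ball_sdiff_center (h : 1 < Module.rank ℝ E) (c : E) (r : ℝ) :
    IsPreconnected (ball c r \ {c}) := by
  rcases le_or_gt r 0 with hr | hr
  · simp [ball_eq_empty.2 hr, isPreconnected_empty]
  set e := OpenPartialHomeomorph.univBall (E := E) c r
  have hinj : InjOn e univ := OpenPartialHomeomorph.univBall_source (E := E) c r ▸ e.injOn
  have himage : ball c r \ {c} = e '' {0}ᶜ := by
    rw [← OpenPartialHomeomorph.univBall_target c hr, ← e.image_source_eq_target,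
      OpenPartialHomeomorph.univBall_source, compl_eq_univ_sdiff,
      hinj.image_sdiff_subset (subset_univ _), image_singleton,
      OpenPartialHomeomorph.univBall_apply_zero]
  rw [himage]
  exact (isConnected_compl_singleton_of_one_lt_rank h 0).isPreconnected.image _
    (OpenPartialHomeomorph.continuous_univBall c r).continuousOn

theorem mem_nhdsNE_or_mem_nhdsNE_of_subset_union (h : 1 < Module.rank ℝ E) {z : E}
    {s u v : Set E} (hs : s ∈ 𝓝[≠] z) (hu : IsOpen u) (hv : IsOpen v) (hsuv : s ⊆ u ∪ v)
    (hdisj : s ∩ (u ∩ v) = ∅) : u ∈ 𝓝[≠] z ∨ v ∈ 𝓝[≠] z := by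
  obtain ⟨r, hr, hball⟩ := Metric.mem_nhdsWithin_iff.1 hs
  have hsub : ball z r \ {z} ⊆ s := hball
  have hdisj' : (ball z r \ {z}) ∩ (u ∩ v) = ∅ :=
    subset_empty_iff.1 ((inter_subset_inter_left _ hsub).trans hdisj.subset)
  refine (isPreconnected_iff_subset_of_disjoint.1 (isPreconnected_ball_sdiff_center h z r)
    u v hu hv (hsub.trans hsuv) hdisj').imp
    (fun hu' => Metric.mem_nhdsWithin_iff.2 ⟨r, hr, hu'⟩)
    (fun hv' => Metric.mem_nhdsWithin_iff.2 ⟨r, hr, hv'⟩)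

theorem IsPreconnected.of_subset_of_forall_mem_nhdsNE (h : 1 < Module.rank ℝ E) {U s : Set E}
    (hU : IsPreconnected U) (hsU : s ⊆ U) (hs : ∀ z ∈ U, s ∈ 𝓝[≠] z) : IsPreconnected s := by
  have : Nontrivial E := rank_pos_iff_nontrivial.1 (zero_lt_one.trans h)
  rw [isPreconnected_iff_subset_of_disjoint] at hU ⊢
  intro u v hu hv hsuv hdisj
  -- Enlarge `u` and `v` by the points having a punctured neighbourhood inside them.
  have hcover : U ⊆ {z | u ∈ 𝓝[≠] z} ∪ {z | v ∈ 𝓝[≠] z} := fun z hz =>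
    mem_nhdsNE_or_mem_nhdsNE_of_subset_union h (hs z hz) hu hv hsuv hdisj
  have hdisj' : U ∩ ({z | u ∈ 𝓝[≠] z} ∩ {z | v ∈ 𝓝[≠] z}) = ∅ := by
    refine eq_empty_of_forall_notMem fun z ⟨hz, huz, hvz⟩ => ?_
    obtain ⟨w, hw⟩ := Filter.nonempty_of_mem (inter_mem (hs z hz) (inter_mem huz hvz))
    exact hdisj.subset hw
  refine (hU _ _ (isOpen_setOf_mem_nhdsNE u) (isOpen_setOf_mem_nhdsNE v) hcover hdisj').imp
    (fun hUu x hx => ?_) (fun hUv x hx => ?_)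
  · refine (hsuv hx).resolve_right fun hxv => ?_
    exact hdisj'.subset ⟨hsU hx, hUu (hsU hx), mem_nhdsWithin_of_mem_nhds (hv.mem_nhds hxv)⟩
  · refine (hsuv hx).resolve_left fun hxu => ?_
    exact hdisj'.subset ⟨hsU hx, mem_nhdsWithin_of_mem_nhds (hu.mem_nhds hxu), hUv (hsU hx)⟩

theorem connectedComponentIn_sdiff_mem_nhdsNE {D D₀ : Set E} (hD : IsOpen D)
    (hpunct : ∀ z ∈ D, D \ D₀ ∈ 𝓝[≠] z) {y z : E} (hy : y ∈ connectedComponentIn D z) :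
    connectedComponentIn D z \ D₀ ∈ 𝓝[≠] y := by
  have hyD : y ∈ D := connectedComponentIn_subset D z hy
  filter_upwards [hpunct y hyD,
    mem_nhdsWithin_of_mem_nhds (hD.connectedComponentIn.mem_nhds hy)] with w hw hwC
  exact ⟨hwC, hw.2⟩

theorem isPreconnected_connectedComponentIn_sdiff (h : 1 < Module.rank ℝ E) {D D₀ : Set E}
    (hD : IsOpen D) (hpunct : ∀ z ∈ D, D \ D₀ ∈ 𝓝[≠] z) (z : E) :
    IsPreconnected (connectedComponentIn D z \ D₀) :=
  isPreconnected_connectedComponentIn.of_subset_of_forall_mem_nhdsNE h sdiff_subset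
    fun _ hy => connectedComponentIn_sdiff_mem_nhdsNE hD hpunct hy

end Connectedness

theorem Polynomial.Bivariate.eval_equivMvPolynomial {R : Type*} [CommRing R] (x y : R)
    (p : R[X][Y]) : MvPolynomial.eval ![x, y] (equivMvPolynomial R p) = p.evalEval x y := by
  change ((MvPolynomial.eval ![x, y]).comp (equivMvPolynomial R).toRingHom) p =
    evalEvalRingHom x y p
  congr 1
  ext <;> simp

theorem Polynomial.eventually_eval_ne_zero_nhdsNE {K : Type*} [Field K] [TopologicalSpace K]
    [T1Space K] {p : K[X]} (hp : p ≠ 0) (a : K) : ∀ᶠ z in 𝓝[≠] a, p.eval z ≠ 0 := by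
  have := mem_codiscrete.1 (p.finite_setOfPred_isRoot hp).compl_mem_codiscrete a
  rw [compl_compl] at this
  exact disjoint_principal_right.1 this

section Bounds

variable {K : Type*} [NormedField K]

theorem Polynomial.norm_eval_leadingCoeff_mul_le (Q : K[X][Y]) {x y : K}
    (h : Q.evalEval x y = 0) :
    ‖Q.leadingCoeff.eval x * y‖ ≤ ∑ i ∈ Finset.range (Q.natDegree + 1), ‖(Q.coeff i).eval x‖ := by
  by_cases ha : Q.leadingCoeff.eval x = 0
  · rw [ha, zero_mul, norm_zero]; positivity
  set p := Q.map (evalRingHom x)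
  have hdeg : p.natDegree = Q.natDegree := natDegree_map_of_leadingCoeff_ne_zero _ ha
  have hlc : p.leadingCoeff = Q.leadingCoeff.eval x :=
    leadingCoeff_map_of_leadingCoeff_ne_zero _ ha
  have hp : p ≠ 0 := leadingCoeff_ne_zero.1 (hlc ▸ ha)
  have hroot : p.IsRoot y := by
    rwa [IsRoot, eval_map, ← coe_eval₂RingHom, ← evalEvalRingHom_eq]
  have hcoeff : ∀ i, ‖p.coeff i‖₊ = ‖(Q.coeff i).eval x‖₊ := fun i => by rw [coeff_map]; rfl
  have hlc0 : ‖p.leadingCoeff‖₊ ≠ 0 := nnnorm_ne_zero_iff.2 (hlc ▸ ha)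
  suffices ‖p.leadingCoeff‖₊ * ‖y‖₊ ≤ ∑ i ∈ Finset.range (p.natDegree + 1), ‖p.coeff i‖₊ by
    rw [← hlc, ← hdeg, norm_mul]
    simpa only [← NNReal.coe_le_coe, NNReal.coe_mul, coe_nnnorm, NNReal.coe_sum, hcoeff] using this
  calc ‖p.leadingCoeff‖₊ * ‖y‖₊ ≤ ‖p.leadingCoeff‖₊ * cauchyBound p := by
        gcongr; exact (hroot.norm_lt_cauchyBound hp).le
    _ = (Finset.range p.natDegree).sup (‖p.coeff ·‖₊) + ‖p.coeff p.natDegree‖₊ := by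
        rw [cauchyBound, mul_add, mul_div_cancel₀ _ hlc0, mul_one, leadingCoeff]
    _ ≤ ∑ i ∈ Finset.range (p.natDegree + 1), ‖p.coeff i‖₊ := by
        rw [Finset.sum_range_succ]
        gcongr
        exact Finset.sup_le fun i hi =>
          Finset.single_le_sum (f := (‖p.coeff ·‖₊)) (fun _ _ => zero_le) hi

variable {Q : K[X][Y]} {f : K → K} {c : K}

theorem Polynomial.isBigO_eval_leadingCoeff_mul_one {l : Filter K} (hl : l ≤ 𝓝 c)
    (h : ∀ᶠ z in l, Q.evalEval z (f z) = 0) :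
    (fun z => Q.leadingCoeff.eval z * f z) =O[l] (fun _ => (1 : ℝ)) := by
  set M : K → ℝ := fun z => ∑ i ∈ Finset.range (Q.natDegree + 1), ‖(Q.coeff i).eval z‖
  have hM : Continuous M := by fun_prop
  refine IsBigO.trans ?_ (((hM.tendsto c).isBigO_one ℝ).mono hl)
  refine IsBigO.of_bound' (h.mono fun z hz => ?_)
  rw [Real.norm_of_nonneg (by positivity)]
  exact norm_eval_leadingCoeff_mul_le Q hz

theorem Polynomial.isBigO_one_of_eval_leadingCoeff_ne_zero (hc : Q.leadingCoeff.eval c ≠ 0)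
    (h : ∀ᶠ z in 𝓝[≠] c, Q.evalEval z (f z) = 0) : f =O[𝓝[≠] c] (fun _ => (1 : ℝ)) := by
  have hinv : (fun z => (Q.leadingCoeff.eval z)⁻¹) =O[𝓝[≠] c] (fun _ => (1 : ℝ)) :=
    ((((Q.leadingCoeff.continuous.tendsto c).inv₀ hc).isBigO_one ℝ).mono nhdsWithin_le_nhds)
  have hne : ∀ᶠ z in 𝓝[≠] c, Q.leadingCoeff.eval z ≠ 0 :=
    nhdsWithin_le_nhds (Q.leadingCoeff.continuous.continuousAt.eventually_ne hc)
  refine (hinv.mul (isBigO_eval_leadingCoeff_mul_one nhdsWithin_le_nhds h)).congr' ?_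
    (Eventually.of_forall fun _ => mul_one 1)
  filter_upwards [hne] with z hz
  exact inv_mul_cancel_left₀ hz (f z)

end Bounds

section Meromorphic

variable {E : Type*} [NormedAddCommGroup E] [NormedSpace ℂ E]

theorem exists_analyticAt_eventuallyEq_of_isBigO_one [CompleteSpace E] {f : ℂ → E} {c : ℂ}
    (hd : ∀ᶠ z in 𝓝[≠] c, DifferentiableAt ℂ f z) (hb : f =O[𝓝[≠] c] (fun _ => (1 : ℝ))) :
    ∃ g : ℂ → E, AnalyticAt ℂ g c ∧ f =ᶠ[𝓝[≠] c] g := by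
  have hlim := Complex.tendsto_limUnder_of_differentiable_on_punctured_nhds_of_bounded_under hd
    ((isBigO_one_iff ℝ).1 (hb.sub (isBigO_const_one ℝ (f c) _)))
  refine ⟨Function.update f c (limUnder (𝓝[≠] c) f), ?_,
    eventually_nhdsWithin_of_forall fun z hz => (Function.update_of_ne hz _ _).symm⟩
  refine Complex.analyticAt_of_differentiable_on_punctured_nhds_of_continuousAt ?_
    (continuousAt_update_same.2 hlim)
  filter_upwards [hd, self_mem_nhdsWithin] with z hz hzc
  exact hz.congr_of_eventuallyEq
    ((eventually_ne_nhds hzc).mono fun w hw => Function.update_of_ne hw _ _)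

theorem meromorphicAt_of_evalEval_eq_zero {f : ℂ → ℂ} {c : ℂ} {Q : ℂ[X][Y]} (hQ : Q ≠ 0)
    (hd : ∀ᶠ z in 𝓝[≠] c, DifferentiableAt ℂ f z)
    (h : ∀ᶠ z in 𝓝[≠] c, Q.evalEval z (f z) = 0) : MeromorphicAt f c := by
  set a := Q.leadingCoeff
  obtain ⟨F, hF, hfF⟩ := exists_analyticAt_eventuallyEq_of_isBigO_one
    (hd.mono fun z hz => (a.differentiable z).mul hz)
    (isBigO_eval_leadingCoeff_mul_one nhdsWithin_le_nhds h)
  have haf : MeromorphicAt (fun z => a.eval z * f z) c := hF.meromorphicAt.congr hfF.symm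
  refine (haf.div (a.differentiable.analyticAt c).meromorphicAt).congr ?_
  filter_upwards [eventually_eval_ne_zero_nhdsNE (leadingCoeff_ne_zero.2 hQ) c] with z hz
  exact mul_div_cancel_left₀ (f z) hz

theorem meromorphicOrderAt_nonneg_of_evalEval_eq_zero {f : ℂ → ℂ} {c : ℂ} {Q : ℂ[X][Y]}
    (hc : Q.leadingCoeff.eval c ≠ 0) (hd : ∀ᶠ z in 𝓝[≠] c, DifferentiableAt ℂ f z)
    (h : ∀ᶠ z in 𝓝[≠] c, Q.evalEval z (f z) = 0) : 0 ≤ meromorphicOrderAt f c := by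
  obtain ⟨g, hg, hfg⟩ :=
    exists_analyticAt_eventuallyEq_of_isBigO_one hd (isBigO_one_of_eval_leadingCoeff_ne_zero hc h)
  rw [meromorphicOrderAt_congr hfg]
  exact hg.meromorphicOrderAt_nonneg

theorem finite_setOf_meromorphicOrderAt_neg_of_evalEval_eq_zero {f : ℂ → ℂ} {C : Set ℂ}
    {Q : ℂ[X][Y]} (hQ : Q ≠ 0) (hd : ∀ c ∈ C, ∀ᶠ z in 𝓝[≠] c, DifferentiableAt ℂ f z)
    (h : ∀ c ∈ C, ∀ᶠ z in 𝓝[≠] c, Q.evalEval z (f z) = 0) :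
    {c ∈ C | meromorphicOrderAt f c < 0}.Finite := by
  refine (Q.leadingCoeff.finite_setOfPred_isRoot (leadingCoeff_ne_zero.2 hQ)).subset ?_
  rintro c ⟨hc, hneg⟩
  by_contra hroot
  exact (meromorphicOrderAt_nonneg_of_evalEval_eq_zero hroot (hd c hc) (h c hc)).not_gt hneg

variable {f : ℂ → E} {U : Set ℂ} {x : ℂ}

theorem MeromorphicOn.analyticAt_toMeromorphicNFOn (hf : MeromorphicOn f U) (hx : x ∈ U)
    (ho : 0 ≤ meromorphicOrderAt f x) : AnalyticAt ℂ (toMeromorphicNFOn f U) x :=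
  (meromorphicNFOn_toMeromorphicNFOn f U hx).meromorphicOrderAt_nonneg_iff_analyticAt.1
    (by rwa [meromorphicOrderAt_toMeromorphicNFOn hf hx])

theorem MeromorphicOn.toMeromorphicNFOn_eq_self_of_analyticAt (hf : MeromorphicOn f U)
    (hx : x ∈ U) (ha : AnalyticAt ℂ f x) : toMeromorphicNFOn f U x = f x := by
  rw [toMeromorphicNFOn_eq_toMeromorphicNFAt hf hx, toMeromorphicNFAt_eq_self.2 ha.meromorphicNFAt]

theorem MeromorphicOn.tendsto_cobounded_toMeromorphicNFOn (hf : MeromorphicOn f U) (hx : x ∈ U)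
    (ho : meromorphicOrderAt f x < 0) :
    Tendsto (toMeromorphicNFOn f U) (𝓝[≠] x) (Bornology.cobounded E) :=
  tendsto_cobounded_of_meromorphicOrderAt_neg (by rwa [meromorphicOrderAt_toMeromorphicNFOn hf hx])

end Meromorphic

theorem exists_evalEval_eq_zero_on_connectedComponentIn {D D₀ : Set ℂ} {f : ℂ → ℂ}
    (hD : IsOpen D) (hpunct : ∀ z ∈ D, D \ D₀ ∈ 𝓝[≠] z)
    (hNash : ∀ z ∈ D \ D₀, ∃ P : MvPolynomial (Fin 2) ℂ, P ≠ 0 ∧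
      ∀ w ∈ connectedComponentIn (D \ D₀) z, MvPolynomial.eval ![w, f w] P = 0)
    {z : ℂ} (hz : z ∈ D) :
    ∃ Q : ℂ[X][Y], Q ≠ 0 ∧ ∀ w ∈ connectedComponentIn D z \ D₀, Q.evalEval w (f w) = 0 := by
  have hrank : 1 < Module.rank ℝ ℂ := Complex.rank_real_complex ▸ Nat.one_lt_ofNat
  obtain ⟨w₀, hw₀⟩ := Filter.nonempty_of_mem
    (connectedComponentIn_sdiff_mem_nhdsNE hD hpunct (mem_connectedComponentIn hz))
  have hsub : connectedComponentIn D z \ D₀ ⊆ connectedComponentIn (D \ D₀) w₀ :=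
    (isPreconnected_connectedComponentIn_sdiff hrank hD hpunct z).subset_connectedComponentIn hw₀
      (sdiff_subset_sdiff_left (connectedComponentIn_subset D z))
  obtain ⟨P, hP, hPf⟩ := hNash w₀ ⟨connectedComponentIn_subset D z hw₀.1, hw₀.2⟩
  refine ⟨(Bivariate.equivMvPolynomial ℂ).symm P, by simpa using hP, fun w hw => ?_⟩
  rw [← Bivariate.eval_equivMvPolynomial, AlgEquiv.apply_symm_apply]
  exact hPf w (hsub hw)

theorem stmt_19_general (D : Set ℂ) (hopen : IsOpen D) (D₀ : Set ℂ)
    (hclosed : ∀ z ∈ D, z ∈ closure D₀ → z ∈ D₀)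
    (hdisc : ∀ z ∈ D₀, ∃ U : Set ℂ, IsOpen U ∧ z ∈ U ∧ U ∩ D₀ = {z})
    (f : ℂ → ℂ) (hf : DifferentiableOn ℂ f (D \ D₀))
    (hNash : ∀ z ∈ D \ D₀, ∃ P : MvPolynomial (Fin 2) ℂ, P ≠ 0 ∧
      ∀ w ∈ connectedComponentIn (D \ D₀) z, MvPolynomial.eval ![w, f w] P = 0) :
    ∃ (S : Set ℂ) (g : ℂ → ℂ), S ⊆ D₀ ∧
      (∀ z ∈ D, (S ∩ connectedComponentIn D z).Finite) ∧
      DifferentiableOn ℂ g (D \ S) ∧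
      (∀ z ∈ D \ D₀, g z = f z) ∧
      ∀ z ∈ S, Tendsto (fun w => ‖g w‖) (𝓝[≠] z) atTop := by
  have hpunct : ∀ z ∈ D, D \ D₀ ∈ 𝓝[≠] z := fun z =>
    sdiff_mem_nhdsNE_of_isolated hopen hclosed hdisc
  have hΩ : IsOpen (D \ D₀) := isOpen_of_forall_mem_nhdsNE fun z hz => hpunct z hz.1
  have hanalytic : ∀ z ∈ D \ D₀, AnalyticAt ℂ f z := fun z hz => hf.analyticAt (hΩ.mem_nhds hz)
  have hdiff : ∀ z ∈ D, ∀ᶠ w in 𝓝[≠] z, DifferentiableAt ℂ f w := fun z hz =>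
    Filter.eventually_of_mem (hpunct z hz) fun w hw => (hanalytic w hw).differentiableAt
  choose Q hQ0 hQ using fun z (hz : z ∈ D) =>
    exists_evalEval_eq_zero_on_connectedComponentIn hopen hpunct hNash hz
  have hQnear : ∀ z (hz : z ∈ D) {y}, y ∈ connectedComponentIn D z →
      ∀ᶠ w in 𝓝[≠] y, (Q z hz).evalEval w (f w) = 0 := fun z hz _ hy =>
    Filter.eventually_of_mem (connectedComponentIn_sdiff_mem_nhdsNE hopen hpunct hy) (hQ z hz)
  have hmero : MeromorphicOn f D := fun z hz =>
    meromorphicAt_of_evalEval_eq_zero (hQ0 z hz) (hdiff z hz)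
      (hQnear z hz (mem_connectedComponentIn hz))
  refine ⟨{z ∈ D | meromorphicOrderAt f z < 0}, toMeromorphicNFOn f D, ?_, ?_, ?_, ?_, ?_⟩
  · rintro z ⟨hz, hneg⟩
    by_contra hz₀
    exact (hanalytic z ⟨hz, hz₀⟩).meromorphicOrderAt_nonneg.not_gt hneg
  · intro z hz
    refine (finite_setOf_meromorphicOrderAt_neg_of_evalEval_eq_zero (hQ0 z hz)
      (fun y hy => hdiff y (connectedComponentIn_subset D z hy)) fun _ => hQnear z hz).subset ?_
    exact fun s ⟨⟨_, hneg⟩, hsC⟩ => ⟨hsC, hneg⟩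
  · rintro z ⟨hz, hzS⟩
    exact (hmero.analyticAt_toMeromorphicNFOn hz (not_lt.1 fun h => hzS ⟨hz, h⟩))
      |>.differentiableAt.differentiableWithinAt
  · exact fun z hz => hmero.toMeromorphicNFOn_eq_self_of_analyticAt hz.1 (hanalytic z hz)
  · exact fun z hz => tendsto_norm_atTop_iff_cobounded.2
      (hmero.tendsto_cobounded_toMeromorphicNFOn hz.1 hz.2)

/-- **Complex Nash functions are meromorphic with finitely many poles.** Let `D ⊆ ℂ` be open
and `D₀ ⊆ D` closed in `D` and discrete. If `f` is holomorphic on `D \ D₀` and, on each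
connected component of `D \ D₀`, satisfies a nonzero polynomial identity `P(z, f z) = 0`,
then `f` extends to a meromorphic function on `D`: there are a set `S ⊆ D₀`, finite in each
connected component of `D`, and a function `g` holomorphic on `D \ S`, agreeing with `f` on
`D \ D₀`, such that every point of `S` is a pole of `g`. -/
theorem stmt_19 (D : Set ℂ) (hopen : IsOpen D) (D₀ : Set ℂ) (hsub : D₀ ⊆ D)
    (hclosed : ∀ z ∈ D, z ∈ closure D₀ → z ∈ D₀)
    (hdisc : ∀ z ∈ D₀, ∃ U : Set ℂ, IsOpen U ∧ z ∈ U ∧ U ∩ D₀ = {z})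
    (f : ℂ → ℂ) (hf : DifferentiableOn ℂ f (D \ D₀))
    (hNash : ∀ z ∈ D \ D₀, ∃ P : MvPolynomial (Fin 2) ℂ, P ≠ 0 ∧
      ∀ w ∈ connectedComponentIn (D \ D₀) z, MvPolynomial.eval ![w, f w] P = 0) :
    ∃ (S : Set ℂ) (g : ℂ → ℂ), S ⊆ D₀ ∧
      (∀ z ∈ D, (S ∩ connectedComponentIn D z).Finite) ∧
      DifferentiableOn ℂ g (D \ S) ∧
      (∀ z ∈ D \ D₀, g z = f z) ∧
      ∀ z ∈ S, Tendsto (fun w => ‖g w‖) (𝓝[≠] z) atTop :=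
  stmt_19_general D hopen D₀ hclosed hdisc f hf hNash
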